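/- arXiv:2204.06842 — 3 statements merged into one kernel-verified Lean document; each statement's English description precedes it below -/
import Mathlib

section
/- A graph G is chordal if and only if every minimal vertex separator of G is a clique of G. -/
/-
If `S` is a minimal separator of `u` and `w` and `x, y ∈ S` are not adjacent, minimality gives
each of `x` and `y` a neighbour in the component `A` of `u` and in the component `B` of `w` in
`G - S`. Shortest `x`-`y` paths through `A` and through `B` are chordless, and since there are no
edges between `A` and `B` they close up to an induced cycle of length at least four.
Conversely, in an induced cycle `v₀ v₁ ⋯ vₙ₋₁` with `n ≥ 4`, a minimal separator of `v₀` and `v₂`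
contains `v₁` and a vertex of the arc `v₃ ⋯ vₙ₋₁`, which is not adjacent to `v₁`.
-/

variable {V : Type*}

/-- `f : ZMod n → V` realizes an induced cycle of length `n` in `G`. -/
def IsInducedCycleMap (G : SimpleGraph V) (n : ℕ) (f : ZMod n → V) : Prop :=
  Function.Injective f ∧ ∀ i j : ZMod n, G.Adj (f i) (f j) ↔ (j = i + 1 ∨ i = j + 1)

/-- A graph is chordal if it has no induced cycle of length at least four. -/
def Chordal (G : SimpleGraph V) : Prop :=
  ∀ n : ℕ, 4 ≤ n → ¬ ∃ f : ZMod n → V, IsInducedCycleMap G n f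

/-- `S` is a vertex separator of `G`: two vertices outside `S` lie in distinct
connected components of `G - S`. -/
def IsSeparator (G : SimpleGraph V) (S : Set V) : Prop :=
  ∃ u w : ↥(Sᶜ), ¬ (G.induce Sᶜ).Reachable u w

/-- `S` is a minimal vertex separator of `G`. -/
def IsMinimalSeparator (G : SimpleGraph V) (S : Set V) : Prop :=
  ∃ (u w : V) (hu : u ∈ Sᶜ) (hw : w ∈ Sᶜ),
    (¬ (G.induce Sᶜ).Reachable ⟨u, hu⟩ ⟨w, hw⟩) ∧
    ∀ (S' : Set V) (hss : S' ⊂ S),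
      (G.induce S'ᶜ).Reachable
        ⟨u, Set.compl_subset_compl.mpr hss.subset hu⟩
        ⟨w, Set.compl_subset_compl.mpr hss.subset hw⟩

namespace SimpleGraph

variable {G : SimpleGraph V} {T : Set V} {a b c u v w : V}

/-- Reachability in `G.induce T`, phrased with walks of `G` to avoid subtypes. -/
def ReachableIn (G : SimpleGraph V) (T : Set V) (a b : V) : Prop :=
  ∃ p : G.Walk a b, ∀ z ∈ p.support, z ∈ T

namespace ReachableIn

lemma refl (ha : a ∈ T) : G.ReachableIn T a a := ⟨.nil, by simpa⟩

lemma mem_left (h : G.ReachableIn T a b) : a ∈ T :=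
  let ⟨p, hp⟩ := h; hp a p.start_mem_support

lemma mem_right (h : G.ReachableIn T a b) : b ∈ T :=
  let ⟨p, hp⟩ := h; hp b p.end_mem_support

lemma symm (h : G.ReachableIn T a b) : G.ReachableIn T b a :=
  let ⟨p, hp⟩ := h; ⟨p.reverse, by simpa using hp⟩

lemma trans (hab : G.ReachableIn T a b) (hbc : G.ReachableIn T b c) : G.ReachableIn T a c :=
  let ⟨p, hp⟩ := hab
  let ⟨q, hq⟩ := hbc
  ⟨p.append q, fun z hz => (Walk.mem_support_append_iff p q).1 hz |>.elim (hp z) (hq z)⟩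

lemma trans_adj (h : G.ReachableIn T a b) (hbc : G.Adj b c) (hc : c ∈ T) :
    G.ReachableIn T a c :=
  h.trans ⟨hbc.toWalk, by simp [h.mem_right, hc]⟩

lemma mono {T' : Set V} (h : G.ReachableIn T a b) (hT : T ⊆ T') : G.ReachableIn T' a b :=
  let ⟨p, hp⟩ := h; ⟨p, fun z hz => hT (hp z hz)⟩

lemma reachableIn_setOf (h : G.ReachableIn T a b) :
    G.ReachableIn {z | G.ReachableIn T a z} a b := by
  classical
  obtain ⟨p, hp⟩ := h
  exact ⟨p, fun z hz =>
    ⟨p.takeUntil z hz, fun y hy => hp y (p.support_takeUntil_subset_support hz hy)⟩⟩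

end ReachableIn

lemma reachableIn_comm : G.ReachableIn T a b ↔ G.ReachableIn T b a := ⟨.symm, .symm⟩

lemma reachableIn_iff_reachable_induce (ha : a ∈ T) (hb : b ∈ T) :
    G.ReachableIn T a b ↔ (G.induce T).Reachable ⟨a, ha⟩ ⟨b, hb⟩ :=
  ⟨fun ⟨p, hp⟩ => ⟨p.induce T hp⟩,
    fun ⟨p⟩ => by
      have hp : ∀ z ∈ (p.map (Embedding.induce T).toHom).support, z ∈ T := by
        simp only [Walk.support_map, List.mem_map]
        rintro _ ⟨z, -, rfl⟩
        exact z.2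
      exact ⟨_, hp⟩⟩

namespace Walk

lemma two_le_length_of_not_adj (p : G.Walk u v) (hne : u ≠ v) (hadj : ¬ G.Adj u v) :
    2 ≤ p.length := by
  rcases p with _ | ⟨h, _ | ⟨_, _⟩⟩
  · exact absurd rfl hne
  · exact absurd h hadj
  · simp

lemma IsChordless.reverse {p : G.Walk u v} (hp : p.IsChordless) : p.reverse.IsChordless := by
  rw [isChordless_iff_forall_mem_edges] at hp ⊢
  simpa using hp

lemma IsChordless.append {p : G.Walk u v} {q : G.Walk v w} (hp : p.IsChordless)
    (hq : q.IsChordless)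
    (h : ∀ a ∈ p.support, ∀ b ∈ q.support, G.Adj a b → a ∈ q.support ∨ b ∈ p.support) :
    (p.append q).IsChordless := by
  rw [isChordless_iff_forall_mem_edges] at hp hq ⊢
  intro a b ha hb hab
  rw [edges_append, List.mem_append]
  rw [mem_support_append_iff] at ha hb
  rcases ha with ha | ha <;> rcases hb with hb | hb
  · exact .inl (hp ha hb hab)
  · rcases h a ha b hb hab with ha' | hb'
    · exact .inr (hq ha' hb hab)
    · exact .inl (hp ha hb' hab)
  · rcases h b hb a ha hab.symm with hb' | ha'
    · exact .inr (hq ha hb' hab)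
    · exact .inl (hp ha' hb hab)
  · exact .inr (hq ha hb hab)

/-- A chord between the `i`-th and `j`-th vertices, `i + 1 < j`, would shortcut the walk. -/
lemma isChordless_of_forall_length_le {p : G.Walk u v} (hpT : ∀ z ∈ p.support, z ∈ T)
    (hmin : ∀ q : G.Walk u v, (∀ z ∈ q.support, z ∈ T) → p.length ≤ q.length) :
    p.IsChordless := by
  have hchord : ∀ i j, i < j → j ≤ p.length → G.Adj (p.getVert i) (p.getVert j) →
      s(p.getVert i, p.getVert j) ∈ p.edges := by
    intro i j hij hj hadj
    have hshort := hmin ((p.take i).append (cons hadj (p.drop j))) fun z hz => by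
      rw [mem_support_append_iff, support_cons, List.mem_cons] at hz
      rcases hz with hz | rfl | hz
      · exact hpT z (List.mem_of_mem_take (by rwa [support_take] at hz))
      · exact hpT _ (p.getVert_mem_support i)
      · exact hpT z (List.mem_of_mem_drop (by rwa [drop_support_eq_support_drop_min] at hz))
    simp only [length_append, take_length, length_cons, drop_length] at hshort
    obtain rfl : j = i + 1 := by omega
    exact (mk_mem_edges_iff_exists p).2 ⟨i, by omega, rfl⟩
  rw [isChordless_iff_forall_mem_edges]
  intro a b ha hb hab
  obtain ⟨i, rfl, hi⟩ := mem_support_iff_exists_getVert.1 ha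
  obtain ⟨j, rfl, hj⟩ := mem_support_iff_exists_getVert.1 hb
  rcases lt_trichotomy i j with hij | rfl | hij
  · exact hchord i j hij hj hab
  · exact absurd hab G.irrefl
  · exact Sym2.eq_swap ▸ hchord j i hij hi hab.symm

lemma IsCycle.isInducedCycleMap {c : G.Walk v v} (hc : c.IsCycle) (hch : c.IsChordless) :
    IsInducedCycleMap G c.length (fun i => c.getVert i.val) := by
  set n := c.length
  have : NeZero n := ⟨by have := hc.three_le_length; omega⟩
  set f : ZMod n → V := fun i => c.getVert i.val
  have hf_natCast : ∀ k ≤ n, f k = c.getVert k := by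
    intro k hk
    rcases hk.lt_or_eq with hk | rfl
    · simp [f, ZMod.val_natCast, Nat.mod_eq_of_lt hk]
    · simp [f, n]
  have hf_inj : Function.Injective f := fun i j h =>
    ZMod.val_injective n (hc.getVert_injOn' (show i.val ≤ n - 1 by have := i.val_lt; omega)
      (show j.val ≤ n - 1 by have := j.val_lt; omega) h)
  have hedges : ∀ i j,
      s(f i, f j) ∈ c.edges ↔ ∃ k : ZMod n, s(f k, f (k + 1)) = s(f i, f j) := by
    intro i j
    rw [mk_mem_edges_iff_exists]
    constructor
    · rintro ⟨k, hk, h⟩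
      refine ⟨k, ?_⟩
      rwa [hf_natCast k hk.le, ← Nat.cast_succ, hf_natCast (k + 1) hk]
    · rintro ⟨k, h⟩
      refine ⟨k.val, k.val_lt, ?_⟩
      rwa [← hf_natCast (k.val + 1) k.val_lt, Nat.cast_succ, ZMod.natCast_zmod_val]
  refine ⟨hf_inj, fun i j => ?_⟩
  calc G.Adj (f i) (f j) ↔ s(f i, f j) ∈ c.edges :=
        ⟨hch.mem_edges (c.getVert_mem_support _) (c.getVert_mem_support _), c.adj_of_mem_edges⟩
    _ ↔ ∃ k : ZMod n, s(k, k + 1) = s(i, j) := by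
        rw [hedges]
        simp only [← Sym2.map_mk, (Sym2.map.injective hf_inj).eq_iff]
    _ ↔ j = i + 1 ∨ i = j + 1 := by
        simp only [Sym2.eq_iff]
        grind

end Walk

lemma ReachableIn.exists_isPath_isChordless (h : G.ReachableIn T u v) :
    ∃ p : G.Walk u v, p.IsPath ∧ p.IsChordless ∧ ∀ z ∈ p.support, z ∈ T := by
  classical
  have hex : ∃ m, ∃ p : G.Walk u v, (∀ z ∈ p.support, z ∈ T) ∧ p.length = m :=
    let ⟨p, hp⟩ := h; ⟨_, p, hp, rfl⟩
  obtain ⟨p, hpT, hlen⟩ := Nat.find_spec hex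
  have hbT : ∀ z ∈ p.bypass.support, z ∈ T :=
    fun z hz => hpT z (p.support_bypass_subset_support hz)
  refine ⟨p.bypass, p.bypass_isPath,
    Walk.isChordless_of_forall_length_le hbT fun q hq => ?_, hbT⟩
  calc p.bypass.length ≤ p.length := p.length_bypass_le_length
    _ = Nat.find hex := hlen
    _ ≤ q.length := Nat.find_min' hex ⟨q, hq, rfl⟩

lemma exists_isPath_isChordless_of_adj {A : Set V} {x y : V} (hA : G.ReachableIn A a b)
    (hxa : G.Adj x a) (hyb : G.Adj y b) :
    ∃ p : G.Walk x y, p.IsPath ∧ p.IsChordless ∧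
      ∀ z ∈ p.support, z ∈ insert x (insert y A) :=
  (((ReachableIn.refl (Set.mem_insert x _)).trans_adj hxa (by simp [hA.mem_left])).trans
    ((hA.mono ((Set.subset_insert _ _).trans (Set.subset_insert _ _))).trans_adj hyb.symm
      (by simp))).exists_isPath_isChordless

lemma exists_adj_reachableIn_of_minimal {S : Set V} {z : V} (hu : u ∉ S)
    (hS : Minimal (fun T => ¬ G.ReachableIn Tᶜ u w) S) (hz : z ∈ S) :
    ∃ a, G.ReachableIn Sᶜ u a ∧ G.Adj z a := by
  obtain ⟨p, hp⟩ : G.ReachableIn (S \ {z})ᶜ u w :=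
    not_not.1 fun h => hS.notMem_of_prop_sdiff_singleton h hz
  obtain ⟨d, hd, hd1, hd2⟩ :=
    p.exists_boundary_dart {a | G.ReachableIn Sᶜ u a} (ReachableIn.refl hu) hS.prop
  -- the walk avoids `S \ {z}`, so where it leaves the component of `u` it must enter `z`
  have hdz : d.snd = z := by
    by_contra hne
    have hdS : d.snd ∉ S := fun hs =>
      hp d.snd (p.dart_snd_mem_support_of_mem_darts hd) ⟨hs, hne⟩
    exact hd2 (ReachableIn.trans_adj hd1 d.adj hdS)
  exact ⟨d.fst, hd1, hdz ▸ d.adj.symm⟩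

lemma exists_minimal_not_reachableIn [Finite V] (hne : a ≠ b) (hnadj : ¬ G.Adj a b) :
    ∃ S : Set V, a ∉ S ∧ b ∉ S ∧ Minimal (fun T => ¬ G.ReachableIn Tᶜ a b) S := by
  have hpair : ¬ G.ReachableIn ({a, b} : Set V)ᶜᶜ a b := by
    rintro ⟨p, hp⟩
    rcases p with _ | ⟨h, p⟩
    · exact hne rfl
    · have hc := hp _ (List.mem_cons_of_mem _ p.start_mem_support)
      simp only [compl_compl, Set.mem_insert_iff, Set.mem_singleton_iff] at hc
      rcases hc with rfl | rfl
      · exact G.irrefl h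
      · exact hnadj h
  obtain ⟨S, hS, hmin⟩ :=
    exists_minimal_le_of_wellFoundedLT (fun T => ¬ G.ReachableIn Tᶜ a b) _ hpair
  exact ⟨S, fun h => hS h (by simp), fun h => hS h (by simp), hmin⟩

end SimpleGraph

open SimpleGraph

variable {G : SimpleGraph V}

lemma isMinimalSeparator_iff {S : Set V} :
    IsMinimalSeparator G S ↔
      ∃ u w, u ∉ S ∧ w ∉ S ∧ Minimal (fun T => ¬ G.ReachableIn Tᶜ u w) S := by
  simp only [IsMinimalSeparator, Set.minimal_iff_forall_ssubset, not_not]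
  constructor
  · rintro ⟨u, w, hu, hw, hsep, hmin⟩
    exact ⟨u, w, hu, hw, by rwa [reachableIn_iff_reachable_induce hu hw],
      fun T hT => (reachableIn_iff_reachable_induce _ _).2 (hmin T hT)⟩
  · rintro ⟨u, w, hu, hw, hsep, hmin⟩
    exact ⟨u, w, hu, hw, by rwa [← reachableIn_iff_reachable_induce hu hw],
      fun T hT => (reachableIn_iff_reachable_induce _ _).1 (hmin hT)⟩

lemma not_chordal_of_isChordless_paths {x y : V} {A B : Set V} {p q : G.Walk x y}
    (hne : x ≠ y) (hnadj : ¬ G.Adj x y)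
    (hAB : ∀ a ∈ A, ∀ b ∈ B, a ≠ b ∧ ¬ G.Adj a b)
    (hp : p.IsPath) (hq : q.IsPath) (hpc : p.IsChordless) (hqc : q.IsChordless)
    (hpA : ∀ z ∈ p.support, z ∈ insert x (insert y A))
    (hqB : ∀ z ∈ q.support, z ∈ insert x (insert y B)) :
    ¬ Chordal G := by
  have hp2 := p.two_le_length_of_not_adj hne hnadj
  have hq2 := q.two_le_length_of_not_adj hne hnadj
  have hcyc : (p.append q.reverse).IsCycle := by
    refine hp.isCycle_append hq.reverse (fun z hzp hzq => ?_) (.inl (by omega))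
    have hzx : z ≠ x := by
      rintro rfl
      exact (List.nodup_cons.1 (p.cons_tail_support ▸ hp.support_nodup)).1 hzp
    have hzy : z ≠ y := by
      rintro rfl
      exact (List.nodup_cons.1 (q.reverse.cons_tail_support ▸ hq.reverse.support_nodup)).1 hzq
    have hzA := hpA z (List.mem_of_mem_tail hzp)
    have hzB := hqB z (by simpa using List.mem_of_mem_tail hzq)
    simp only [Set.mem_insert_iff, hzx, hzy, false_or] at hzA hzB
    exact (hAB z hzA z hzB).1 rfl
  have hch : (p.append q.reverse).IsChordless := by
    refine hpc.append hqc.reverse fun a ha b hb hab => ?_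
    by_contra! h
    simp only [Walk.support_reverse, List.mem_reverse] at hb h
    have haA := hpA a ha
    have hbB := hqB b hb
    simp only [Set.mem_insert_iff] at haA hbB
    rcases haA with rfl | rfl | haA
    · exact h.1 q.start_mem_support
    · exact h.1 q.end_mem_support
    rcases hbB with rfl | rfl | hbB
    · exact h.2 p.start_mem_support
    · exact h.2 p.end_mem_support
    exact (hAB a haA b hbB).2 hab
  intro hG
  exact hG _ (by simp; omega) ⟨_, hcyc.isInducedCycleMap hch⟩

lemma Chordal.isClique_of_minimal (hG : Chordal G) {S : Set V} {u w : V} (hu : u ∉ S)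
    (hw : w ∉ S) (hS : Minimal (fun T => ¬ G.ReachableIn Tᶜ u w) S) : G.IsClique S := by
  intro x hx y hy hne
  by_contra hnadj
  have hS' : Minimal (fun T => ¬ G.ReachableIn Tᶜ w u) S := by
    simpa only [reachableIn_comm] using hS
  set A := {a | G.ReachableIn Sᶜ u a}
  set B := {b | G.ReachableIn Sᶜ w b}
  have hAB : ∀ a ∈ A, ∀ b ∈ B, a ≠ b ∧ ¬ G.Adj a b := fun a ha b hb =>
    ⟨fun hab => hS.prop (ha.trans (hab ▸ hb.symm)),
      fun hab => hS.prop ((ha.trans_adj hab hb.mem_right).trans hb.symm)⟩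
  obtain ⟨a, ha, hxa⟩ := exists_adj_reachableIn_of_minimal hu hS hx
  obtain ⟨a', ha', hya'⟩ := exists_adj_reachableIn_of_minimal hu hS hy
  obtain ⟨b, hb, hxb⟩ := exists_adj_reachableIn_of_minimal hw hS' hx
  obtain ⟨b', hb', hyb'⟩ := exists_adj_reachableIn_of_minimal hw hS' hy
  obtain ⟨p, hp, hpc, hpA⟩ := exists_isPath_isChordless_of_adj
    (ha.reachableIn_setOf.symm.trans ha'.reachableIn_setOf) hxa hya'
  obtain ⟨q, hq, hqc, hqB⟩ := exists_isPath_isChordless_of_adj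
    (hb.reachableIn_setOf.symm.trans hb'.reachableIn_setOf) hxb hyb'
  exact not_chordal_of_isChordless_paths hne hnadj hAB hp hq hpc hqc hpA hqB hG

lemma ZMod.natCast_ne_zero_of_lt {n : ℕ} (m : ℕ) (h0 : 0 < m) (h : m < n) :
    (m : ZMod n) ≠ 0 := by
  rw [Ne, ZMod.natCast_eq_zero_iff]
  exact Nat.not_dvd_of_pos_of_lt h0 h

namespace IsInducedCycleMap

variable {n : ℕ} {f : ZMod n → V}

lemma adj_add_one (hf : IsInducedCycleMap G n f) (i : ZMod n) : G.Adj (f i) (f (i + 1)) :=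
  (hf.2 _ _).2 (.inl rfl)

lemma ne_zero_two (hf : IsInducedCycleMap G n f) (hn : 4 ≤ n) : f 0 ≠ f 2 :=
  hf.1.ne fun h =>
    ZMod.natCast_ne_zero_of_lt (n := n) 2 (by omega) (by omega) (by simpa using h.symm)

lemma not_adj_zero_two (hf : IsInducedCycleMap G n f) (hn : 4 ≤ n) : ¬ G.Adj (f 0) (f 2) := by
  rw [hf.2]
  rintro (h | h)
  · exact ZMod.natCast_ne_zero_of_lt (n := n) 1 (by omega) (by omega)
      (by push_cast; linear_combination h)
  · exact ZMod.natCast_ne_zero_of_lt (n := n) 3 (by omega) (by omega)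
      (by push_cast; linear_combination -h)

lemma reachableIn_add (hf : IsInducedCycleMap G n f) {T : Set V} (a : ZMod n) :
    ∀ m : ℕ, (∀ j ≤ m, f (a + j) ∈ T) → G.ReachableIn T (f a) (f (a + m))
  | 0, h => by simpa using ReachableIn.refl (by simpa using h 0 le_rfl)
  | m + 1, h => by
    simpa [add_assoc] using (hf.reachableIn_add a m fun j hj => h j (by omega)).trans_adj
      (hf.adj_add_one _) (by simpa [add_assoc] using h (m + 1) le_rfl)

lemma not_isClique (hf : IsInducedCycleMap G n f) (hn : 4 ≤ n) {S : Set V} (h0 : f 0 ∉ S)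
    (h2 : f 2 ∉ S) (hS : ¬ G.ReachableIn Sᶜ (f 0) (f 2)) : ¬ G.IsClique S := by
  have : NeZero n := ⟨by omega⟩
  have h1 : f 1 ∈ S := by
    by_contra h1
    refine hS (((ReachableIn.refl h0).trans_adj ?_ h1).trans_adj ?_ h2)
    · simpa using hf.adj_add_one 0
    · simpa [one_add_one_eq_two] using hf.adj_add_one 1
  obtain ⟨k, hk1, hk⟩ : ∃ k, k ≠ 1 ∧ f k ∈ S := by
    by_contra! h
    refine hS (ReachableIn.symm ?_)
    have harc := hf.reachableIn_add (T := Sᶜ) 2 (n - 2) fun j hj => h (2 + j) fun h21 =>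
      ZMod.natCast_ne_zero_of_lt (n := n) (j + 1) (by omega) (by omega)
        (by push_cast; linear_combination h21)
    rwa [Nat.cast_sub (by omega), ZMod.natCast_self, Nat.cast_ofNat, add_sub_cancel] at harc
  intro hS
  rcases (hf.2 1 k).1 (hS h1 hk (hf.1.ne hk1.symm)) with rfl | h
  · exact h2 (by simpa [one_add_one_eq_two] using hk)
  · exact h0 (by rwa [show k = 0 by linear_combination -h] at hk)

end IsInducedCycleMap

/-- A graph is chordal iff every minimal vertex separator is a clique. -/
theorem chordal_iff_minimal_separators_clique [Fintype V] (G : SimpleGraph V) :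
    Chordal G ↔ ∀ S : Set V, IsMinimalSeparator G S → G.IsClique S := by
  simp only [isMinimalSeparator_iff]
  constructor
  · rintro hG S ⟨u, w, hu, hw, hS⟩
    exact hG.isClique_of_minimal hu hw hS
  · rintro h n hn ⟨f, hf⟩
    obtain ⟨S, h0, h2, hS⟩ :=
      exists_minimal_not_reachableIn (hf.ne_zero_two hn) (hf.not_adj_zero_two hn)
    exact hf.not_isClique hn h0 h2 hS.prop (h S ⟨_, _, h0, h2, hS⟩)
end

section
/- Let G be a graph and let H be a minimum chordal completion of G. Then for every vertex v of G and every clique C of H properly contained in N_H(v), there exists a vertex x ∈ V(H) \ C such that vx ∈ E(G). -/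
variable {V : Type*}

/-- `H` is a chordal completion of `G`: a chordal spanning supergraph. -/
def IsChordalCompletion (G H : SimpleGraph V) : Prop :=
  G ≤ H ∧ Chordal H

/-- `H` is a minimum chordal completion of `G`: no chordal completion has fewer edges. -/
def IsMinChordalCompletion (G H : SimpleGraph V) : Prop :=
  IsChordalCompletion G H ∧
    ∀ H' : SimpleGraph V, IsChordalCompletion G H' →
      H.edgeSet.ncard ≤ H'.edgeSet.ncard

/-- The number of fill edges of a completion `H` of `G`. -/
noncomputable def fill (G H : SimpleGraph V) : ℕ :=
  H.edgeSet.ncard - G.edgeSet.ncard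

/-! If every `G`-neighbour of `v` lay in `C`, deleting from `H` the edges joining `v` to
the vertices outside `C` would keep a completion of `G`, and it would still be chordal, because `v`
now has a clique as neighbourhood and so lies on no induced cycle of length at least four, while the
rest of `H` is untouched. Since `C ⊂ N_H(v)`, at least one edge is deleted, contradicting the
minimality of `H`. -/

lemma ZMod.natCast_ne_zero_of_pos_of_lt {n k : ℕ} (hk : 0 < k) (hkn : k < n) :
    (k : ZMod n) ≠ 0 := by
  rw [Ne, ZMod.natCast_eq_zero_iff]
  exact fun h => (Nat.le_of_dvd hk h).not_gt hkn

lemma IsInducedCycleMap.not_isClique_neighborSet {G : SimpleGraph V} {n : ℕ} {f : ZMod n → V}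
    (hf : IsInducedCycleMap G n f) (hn : 4 ≤ n) (i : ZMod n) :
    ¬ G.IsClique (G.neighborSet (f i)) := by
  have hne : ∀ k : ℕ, 0 < k → k < 4 → (k : ZMod n) ≠ 0 := fun k hk hk4 =>
    ZMod.natCast_ne_zero_of_pos_of_lt hk (by omega)
  have hprev : G.Adj (f i) (f (i - 1)) := (hf.2 _ _).mpr (Or.inr (by ring))
  have hnext : G.Adj (f i) (f (i + 1)) := (hf.2 _ _).mpr (Or.inl rfl)
  have hdist : f (i - 1) ≠ f (i + 1) := fun h =>
    hne 2 (by norm_num) (by norm_num) (by push_cast; linear_combination -(hf.1 h))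
  intro hclique
  rcases (hf.2 _ _).mp (hclique hprev hnext hdist) with h | h
  · exact hne 1 (by norm_num) (by norm_num) (by push_cast; linear_combination h)
  · exact hne 3 (by norm_num) (by norm_num) (by push_cast; linear_combination -h)

lemma IsInducedCycleMap.of_adj_iff_of_forall_ne {G G' : SimpleGraph V} {n : ℕ} {f : ZMod n → V}
    {v : V} (hf : IsInducedCycleMap G' n f) (hv : ∀ i, f i ≠ v)
    (hGG' : ∀ a b, a ≠ v → b ≠ v → (G'.Adj a b ↔ G.Adj a b)) :
    IsInducedCycleMap G n f :=
  ⟨hf.1, fun i j => (hGG' _ _ (hv i) (hv j)).symm.trans (hf.2 i j)⟩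

lemma Chordal.of_adj_iff_of_isClique_neighborSet {G G' : SimpleGraph V} (hG : Chordal G) {v : V}
    (hGG' : ∀ a b, a ≠ v → b ≠ v → (G'.Adj a b ↔ G.Adj a b))
    (hv : G'.IsClique (G'.neighborSet v)) :
    Chordal G' := by
  rintro n hn ⟨f, hf⟩
  by_cases hvf : ∃ i, f i = v
  · obtain ⟨i, rfl⟩ := hvf
    exact hf.not_isClique_neighborSet hn i hv
  · simp only [not_exists] at hvf
    exact hG n hn ⟨f, hf.of_adj_iff_of_forall_ne hvf hGG'⟩

namespace SimpleGraph

def restrictNeighborSet (H : SimpleGraph V) (v : V) (C : Set V) : SimpleGraph V where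
  Adj a b := H.Adj a b ∧ (a = v → b ∈ C) ∧ (b = v → a ∈ C)
  symm := ⟨fun _ _ ⟨h, ha, hb⟩ => ⟨h.symm, hb, ha⟩⟩
  loopless := ⟨fun _ h => H.irrefl h.1⟩

variable {H : SimpleGraph V} {v : V} {C : Set V}

lemma restrictNeighborSet_adj {a b : V} :
    (H.restrictNeighborSet v C).Adj a b ↔ H.Adj a b ∧ (a = v → b ∈ C) ∧ (b = v → a ∈ C) :=
  Iff.rfl

lemma restrictNeighborSet_le : H.restrictNeighborSet v C ≤ H := fun _ _ h => h.1

lemma restrictNeighborSet_adj_iff_of_ne {a b : V} (ha : a ≠ v) (hb : b ≠ v) :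
    (H.restrictNeighborSet v C).Adj a b ↔ H.Adj a b := by
  simp [restrictNeighborSet_adj, ha, hb]

lemma le_restrictNeighborSet {G : SimpleGraph V} (hGH : G ≤ H) (hGv : G.neighborSet v ⊆ C) :
    G ≤ H.restrictNeighborSet v C := by
  intro a b hab
  refine ⟨hGH hab, ?_, ?_⟩
  · rintro rfl
    exact hGv hab
  · rintro rfl
    exact hGv hab.symm

lemma neighborSet_restrictNeighborSet_subset :
    (H.restrictNeighborSet v C).neighborSet v ⊆ C :=
  fun _ h => h.2.1 rfl

lemma IsClique.restrictNeighborSet (hC : H.IsClique C) (hCv : C ⊆ H.neighborSet v) :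
    (H.restrictNeighborSet v C).IsClique C := by
  have hvC : v ∉ C := fun h => H.irrefl (hCv h)
  intro a ha b hb hab
  exact (restrictNeighborSet_adj_iff_of_ne (ne_of_mem_of_not_mem ha hvC)
    (ne_of_mem_of_not_mem hb hvC)).mpr (hC ha hb hab)

lemma edgeSet_restrictNeighborSet_ssubset {w : V} (hw : H.Adj v w) (hwC : w ∉ C) :
    (H.restrictNeighborSet v C).edgeSet ⊂ H.edgeSet := by
  refine edgeSet_ssubset_edgeSet.mpr (restrictNeighborSet_le.lt_of_ne fun heq => hwC ?_)
  rw [← heq] at hw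
  exact hw.2.1 rfl

end SimpleGraph

lemma Chordal.restrictNeighborSet {H : SimpleGraph V} {v : V} {C : Set V} (hH : Chordal H)
    (hC : H.IsClique C) (hCv : C ⊆ H.neighborSet v) : Chordal (H.restrictNeighborSet v C) :=
  hH.of_adj_iff_of_isClique_neighborSet
    (fun _ _ => SimpleGraph.restrictNeighborSet_adj_iff_of_ne)
    ((hC.restrictNeighborSet hCv).subset SimpleGraph.neighborSet_restrictNeighborSet_subset)

open SimpleGraph in
/-- In a minimum chordal completion `H` of `G`, for every vertex `v` and every clique `C`
of `H` properly contained in `N_H(v)`, some vertex outside `C` is adjacent to `v`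
already in `G`. -/
theorem exists_G_neighbor_outside_clique [Fintype V] (G H : SimpleGraph V)
    (hmin : IsMinChordalCompletion G H) (v : V) (C : Set V)
    (hC : H.IsClique C) (hsub : C ⊂ H.neighborSet v) :
    ∃ x : V, x ∉ C ∧ G.Adj v x := by
  by_contra! hGv
  obtain ⟨⟨hGH, hH⟩, hleast⟩ := hmin
  obtain ⟨w, hw, hwC⟩ := Set.exists_of_ssubset hsub
  have hcompletion : IsChordalCompletion G (H.restrictNeighborSet v C) :=
    ⟨le_restrictNeighborSet hGH fun x hx => by_contra fun hxC => hGv x hxC hx,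
      hH.restrictNeighborSet hC hsub.subset⟩
  exact (hleast _ hcompletion).not_gt
    (Set.ncard_lt_ncard (edgeSet_restrictNeighborSet_ssubset hw hwC) (Set.toFinite _))
end

section
/- Let F be a co-bipartite graph with (A,B) a bipartition of the complement of F, let k be a nonnegative integer, and let G be the graph constructed from F, A, B and k as described. Then F has a chordal completion with at most k fill edges if and only if G has a chordal completion with at most K fill edges, where K = k + |A|(|A|−1)/2. -/
variable {V : Type*}

/-- Auxiliary relation defining the gadget graph built from a co-bipartite graph `F`
with bipartition `(A, B)` of its complement: the vertices are
`V(F) ⊕ {c_1, …, c_{K+1}} ⊕ {v}`; the edges of `F` with both endpoints in `A` are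
deleted, each `c_i` is made adjacent to every other vertex except `v`, and `v` is
adjacent exactly to the vertices of `A`. -/
def gadgetRel {α : Type*} (F : SimpleGraph α) (A : Set α) (K : ℕ) :
    (α ⊕ Fin (K + 1) ⊕ Unit) → (α ⊕ Fin (K + 1) ⊕ Unit) → Prop
  | .inl u, .inl w => F.Adj u w ∧ ¬(u ∈ A ∧ w ∈ A)
  | .inl _, .inr (.inl _) => True
  | .inr (.inl _), .inr (.inl _) => True
  | .inl a, .inr (.inr _) => a ∈ A
  | _, _ => False

/-- The gadget graph `G` of the reduction. -/
def gadgetGraph {α : Type*} (F : SimpleGraph α) (A : Set α) (K : ℕ) :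
    SimpleGraph (α ⊕ Fin (K + 1) ⊕ Unit) :=
  SimpleGraph.fromRel (gadgetRel F A K)

/-!
If `F'` is a chordal completion of `F`, adding all edges of `F'` to the gadget (in particular the
clique on `A` again) gives a chordal completion of `G`: `v` is simplicial, each `c_i` sees every
vertex but `v`, and what remains is `F'`. Its fill edges are those of `F'` together with the
`|A|(|A|-1)/2` edges inside `A`.

Conversely, a chordal completion `H` of `G` with at most `K` fill edges cannot join all `K + 1`
vertices `c_i` to `v`. A `c_i` not adjacent to `v` forces, through the 4-cycles `v a c_i b`, every
edge inside `A`, so `H` restricted to `V(F)` is a chordal completion of `F`, and it has at most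
`K - |A|(|A|-1)/2 = k` fill edges.
-/

open SimpleGraph

def IsSimplicialVertex (G : SimpleGraph V) (x : V) : Prop :=
  G.IsClique (G.neighborSet x)

namespace IsInducedCycleMap

variable {W : Type*} {G : SimpleGraph V} {n : ℕ} {f : ZMod n → V}

lemma map {H : SimpleGraph W} (φ : G ↪g H) (hf : IsInducedCycleMap G n f) :
    IsInducedCycleMap H n (φ ∘ f) :=
  ⟨φ.injective.comp hf.1, fun i j => φ.map_adj_iff.trans (hf.2 i j)⟩

lemma ne_add_two_and_not_adj (hf : IsInducedCycleMap G n f) (hn : 4 ≤ n) (i : ZMod n) :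
    f i ≠ f (i + 2) ∧ ¬ G.Adj (f i) (f (i + 2)) := by
  have hcast : ∀ m : ℕ, 0 < m → m < n → (m : ZMod n) ≠ 0 := fun m hm hmn h =>
    hmn.not_ge (Nat.le_of_dvd hm ((ZMod.natCast_eq_zero_iff m n).1 h))
  have h1 : (1 : ZMod n) ≠ 0 := by exact_mod_cast hcast 1 one_pos (by omega)
  have h2 : (2 : ZMod n) ≠ 0 := by exact_mod_cast hcast 2 two_pos (by omega)
  have h3 : (3 : ZMod n) ≠ 0 := by exact_mod_cast hcast 3 three_pos (by omega)
  refine ⟨fun h => h2 ?_, fun h => ?_⟩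
  · linear_combination -(hf.1 h)
  · rcases (hf.2 _ _).1 h with h' | h'
    · exact h1 (by linear_combination h')
    · exact h3 (by linear_combination -h')

lemma not_isSimplicialVertex (hf : IsInducedCycleMap G n f) (hn : 4 ≤ n) (i : ZMod n) :
    ¬ IsSimplicialVertex G (f i) := by
  intro hsimp
  obtain ⟨hne, hnadj⟩ := hf.ne_add_two_and_not_adj hn (i - 1)
  rw [show i - 1 + 2 = i + 1 by ring] at hne hnadj
  exact hnadj (hsimp ((hf.2 _ _).2 (Or.inr (sub_add_cancel i 1).symm))
    ((hf.2 _ _).2 (Or.inl rfl)) hne)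

end IsInducedCycleMap

section

variable {W : Type*}

theorem Chordal.comap {H : SimpleGraph W} (φ : V ↪ W) (hH : Chordal H) : Chordal (H.comap φ) :=
  fun n hn ⟨f, hf⟩ => hH n hn ⟨φ ∘ f, hf.map (Embedding.comap φ H)⟩

/-- No vertex of an induced cycle of length at least four is simplicial, and each one has a
non-neighbour two steps further along the cycle. -/
theorem Chordal.of_comap {H : SimpleGraph W} (φ : V ↪ W) (hH : Chordal (H.comap φ))
    (hout : ∀ x ∉ Set.range φ, IsSimplicialVertex H x ∨
      ∀ y, y ≠ x → ¬ IsSimplicialVertex H y → H.Adj x y) :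
    Chordal H := by
  rintro n hn ⟨f, hf⟩
  have hrange : ∀ i, f i ∈ Set.range φ := by
    intro i
    by_contra hi
    obtain ⟨hne, hnadj⟩ := hf.ne_add_two_and_not_adj hn i
    rcases hout _ hi with hsimp | hdom
    · exact hf.not_isSimplicialVertex hn i hsimp
    · exact hnadj (hdom _ hne.symm (hf.not_isSimplicialVertex hn _))
  choose g hg using hrange
  refine hH n hn ⟨g, fun i j h => hf.1 (by rw [← hg i, ← hg j, h]), fun i j => ?_⟩
  rw [comap_adj, hg, hg]
  exact hf.2 i j

theorem Chordal.adj_or_adj_of_four_cycle {H : SimpleGraph V} (hH : Chordal H) {a b c d : V}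
    (hab : H.Adj a b) (hbc : H.Adj b c) (hcd : H.Adj c d) (hda : H.Adj d a)
    (hac : a ≠ c) (hbd : b ≠ d) : H.Adj a c ∨ H.Adj b d := by
  by_contra! hchord
  have hZ4 : ∀ i : ZMod 4, i = 0 ∨ i = 1 ∨ i = 2 ∨ i = 3 := by decide
  refine hH 4 le_rfl ⟨![a, b, c, d], fun i j => ?_, fun i j => ?_⟩
  · rcases hZ4 i with rfl | rfl | rfl | rfl <;> rcases hZ4 j with rfl | rfl | rfl | rfl <;>
      simp [hab.ne, hbc.ne, hcd.ne, hda.ne, hab.ne.symm, hbc.ne.symm, hcd.ne.symm, hda.ne.symm,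
        hac, hbd, hac.symm, hbd.symm]
  · rcases hZ4 i with rfl | rfl | rfl | rfl <;> rcases hZ4 j with rfl | rfl | rfl | rfl <;>
      simp [hab, hbc, hcd, hda.symm, hchord, adj_comm] <;> decide

lemma fill_eq_ncard_sdiff [Finite V] {G H : SimpleGraph V} (h : G ≤ H) :
    fill G H = (H.edgeSet \ G.edgeSet).ncard := by
  rw [fill, Set.ncard_sdiff (edgeSet_mono h)]

lemma fill_sdiff_of_le [Finite V] {K F F' : SimpleGraph V} (hK : K ≤ F) (hF : F ≤ F') :
    fill (F \ K) F' = fill F F' + K.edgeSet.ncard := by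
  have hsub := Set.ncard_sdiff (edgeSet_mono hK)
  have hKF := Set.ncard_le_ncard (edgeSet_mono hK)
  have hFF' := Set.ncard_le_ncard (edgeSet_mono hF)
  rw [fill, fill, edgeSet_sdiff, hsub]
  omega

lemma fill_comap_le [Finite W] (φ : V ↪ W) {G H : SimpleGraph W} (h : G ≤ H) :
    fill (G.comap φ) (H.comap φ) ≤ fill G H := by
  have : Finite V := Finite.of_injective φ φ.injective
  rw [fill_eq_ncard_sdiff (comap_monotone φ h), fill_eq_ncard_sdiff h,
    ← Set.ncard_image_of_injective _ φ.sym2Map.injective]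
  refine Set.ncard_le_ncard ?_
  rintro _ ⟨e, ⟨he, hne⟩, rfl⟩
  exact ⟨(Embedding.comap φ H).map_mem_edgeSet_iff.2 he,
    fun h => hne ((Embedding.comap φ G).map_mem_edgeSet_iff.1 h)⟩

lemma fill_sup_map [Finite W] (φ : V ↪ W) {G : SimpleGraph W} {F : SimpleGraph V}
    (h : G.comap φ ≤ F) : fill G (G ⊔ F.map φ) = fill (G.comap φ) F := by
  have : Finite V := Finite.of_injective φ φ.injective
  rw [fill_eq_ncard_sdiff le_sup_left, fill_eq_ncard_sdiff h, edgeSet_sup, Set.union_sdiff_left,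
    edgeSet_map, ← (Embedding.comap φ G).preimage_edgeSet, ← Set.image_sdiff_preimage,
    Set.ncard_image_of_injective _ φ.sym2Map.injective]
  rfl

lemma exists_not_adj_of_fill_lt [Finite V] {G H : SimpleGraph V} (hle : G ≤ H) {ι : Type*}
    [Finite ι] {x : ι → V} (hx : Function.Injective x) {y : V} (hG : ∀ i, ¬ G.Adj (x i) y)
    (hfill : fill G H < Nat.card ι) : ∃ i, ¬ H.Adj (x i) y := by
  by_contra! hH
  have hinj : Function.Injective fun i => s(x i, y) := fun i j h => hx (Sym2.congr_left.1 h)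
  have hsub : Set.range (fun i => s(x i, y)) ⊆ H.edgeSet \ G.edgeSet := by
    rintro _ ⟨i, rfl⟩
    exact ⟨hH i, hG i⟩
  have hcard := Set.ncard_le_ncard hsub
  rw [Set.ncard_range_of_injective hinj, ← fill_eq_ncard_sdiff hle] at hcard
  omega

end

lemma SimpleGraph.ncard_edgeSet_spanningCoe_top [Finite V] (A : Set V) :
    (⊤ : SimpleGraph A).spanningCoe.edgeSet.ncard = A.ncard * (A.ncard - 1) / 2 := by
  classical
  have := Fintype.ofFinite A
  rw [edgeSet_map, Set.ncard_image_of_injective _ (Function.Embedding.sym2Map _).injective,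
    ← coe_edgeFinset, Set.ncard_coe_finset, card_edgeFinset_top_eq_card_choose_two,
    Nat.choose_two_right, ← Nat.card_eq_fintype_card, Nat.card_coe_set_eq]

lemma SimpleGraph.spanningCoe_top_adj {A : Set V} {u w : V} :
    (⊤ : SimpleGraph A).spanningCoe.Adj u w ↔ u ≠ w ∧ u ∈ A ∧ w ∈ A := by
  constructor
  · rintro ⟨hne, a, b, -, rfl, rfl⟩
    exact ⟨hne, a.2, b.2⟩
  · rintro ⟨hne, hu, hw⟩
    exact ⟨hne, ⟨u, hu⟩, ⟨w, hw⟩, fun h => hne (congrArg Subtype.val h), rfl, rfl⟩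

lemma SimpleGraph.IsClique.spanningCoe_top_le {G : SimpleGraph V} {A : Set V}
    (hA : G.IsClique A) :
    (⊤ : SimpleGraph A).spanningCoe ≤ G := by
  intro u w huw
  obtain ⟨hne, hu, hw⟩ := spanningCoe_top_adj.1 huw
  exact hA hu hw hne

section Gadget

variable {α : Type*} (F : SimpleGraph α) (A : Set α) (K : ℕ)

lemma comap_inl_gadgetGraph :
    (gadgetGraph F A K).comap (Function.Embedding.inl : α ↪ _) =
      F \ (⊤ : SimpleGraph A).spanningCoe := by
  ext u w
  simp only [comap_adj, Function.Embedding.inl_apply, gadgetGraph, fromRel_adj, gadgetRel,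
    sdiff_adj, spanningCoe_top_adj, F.adj_comm w u, ne_eq, Sum.inl.injEq]
  have : F.Adj u w → u ≠ w := Adj.ne
  tauto

lemma gadgetGraph_adj_inr_inl {j : Fin (K + 1)} {x : α ⊕ Fin (K + 1) ⊕ Unit}
    (hj : x ≠ .inr (.inl j)) (hv : x ≠ .inr (.inr ())) :
    (gadgetGraph F A K).Adj (.inr (.inl j)) x := by
  rcases x with u | j' | ⟨⟩ <;> simp_all [gadgetGraph, gadgetRel, eq_comm]

lemma gadgetGraph_not_adj_inr_inl_inr (j : Fin (K + 1)) :
    ¬ (gadgetGraph F A K).Adj (.inr (.inl j)) (.inr (.inr ())) := by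
  simp [gadgetGraph, gadgetRel]

lemma gadgetGraph_adj_inr_inr_iff {x : α ⊕ Fin (K + 1) ⊕ Unit} :
    (gadgetGraph F A K).Adj (.inr (.inr ())) x ↔ ∃ a ∈ A, x = .inl a := by
  rcases x with u | j' | ⟨⟩ <;> simp [gadgetGraph, gadgetRel]

end Gadget

section Reduction

variable {α : Type*} {F F' : SimpleGraph α} {A : Set α} {K : ℕ}

lemma fill_comap_inl_gadgetGraph [Finite α] (hA : F.IsClique A) (hF : F ≤ F') :
    fill ((gadgetGraph F A K).comap (Function.Embedding.inl : α ↪ _)) F' =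
      fill F F' + A.ncard * (A.ncard - 1) / 2 := by
  rw [comap_inl_gadgetGraph, fill_sdiff_of_le hA.spanningCoe_top_le hF,
    ncard_edgeSet_spanningCoe_top]

lemma comap_inl_gadgetGraph_le (hF : F ≤ F') :
    (gadgetGraph F A K).comap (Function.Embedding.inl : α ↪ _) ≤ F' := by
  rw [comap_inl_gadgetGraph]
  exact sdiff_le.trans hF

lemma chordal_gadgetGraph_sup_map (hA : F.IsClique A) (hF : F ≤ F') (hF' : Chordal F') :
    Chordal (gadgetGraph F A K ⊔ F'.map Function.Embedding.inl) := by
  set H := gadgetGraph F A K ⊔ F'.map Function.Embedding.inl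
  have hcomap : H.comap (Function.Embedding.inl : α ↪ _) = F' := by
    ext u w
    simp only [H, comap_adj, sup_adj, map_adj_apply]
    exact or_iff_right_of_imp fun h => comap_inl_gadgetGraph_le hF h
  have hv_adj : ∀ {y}, H.Adj (.inr (.inr ())) y → ∃ a ∈ A, y = .inl a := by
    rintro y (h | ⟨-, u, w, -, hu, -⟩)
    · exact (gadgetGraph_adj_inr_inr_iff F A K).1 h
    · cases hu
  have hv : IsSimplicialVertex H (.inr (.inr ())) := by
    intro y hy z hz hyz
    obtain ⟨a, ha, rfl⟩ := hv_adj hy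
    obtain ⟨b, hb, rfl⟩ := hv_adj hz
    have hab : a ≠ b := fun h => hyz (congrArg _ h)
    exact Or.inr (map_adj_apply.2 (hF (hA ha hb hab)))
  refine Chordal.of_comap Function.Embedding.inl (hcomap ▸ hF') ?_
  rintro (u | j | ⟨⟩) hx
  · exact absurd ⟨u, rfl⟩ hx
  · refine Or.inr fun y hyj hy => Or.inl (gadgetGraph_adj_inr_inl F A K hyj ?_)
    rintro rfl
    exact hy hv
  · exact Or.inl hv

lemma isClique_comap_inl_of_fill_le [Finite α] {H : SimpleGraph (α ⊕ Fin (K + 1) ⊕ Unit)}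
    (hle : gadgetGraph F A K ≤ H) (hH : Chordal H) (hfill : fill (gadgetGraph F A K) H ≤ K) :
    (H.comap (Function.Embedding.inl : α ↪ _)).IsClique A := by
  obtain ⟨j, hj⟩ : ∃ j : Fin (K + 1), ¬ H.Adj (.inr (.inl j)) (.inr (.inr ())) :=
    exists_not_adj_of_fill_lt hle (fun _ _ h => Sum.inl_injective (Sum.inr_injective h))
      (gadgetGraph_not_adj_inr_inl_inr F A K) (by simpa using Nat.lt_succ_of_le hfill)
  intro a ha b hb hab
  have hv : ∀ {c}, c ∈ A → H.Adj (.inr (.inr ())) (.inl c) := fun hc =>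
    hle ((gadgetGraph_adj_inr_inr_iff F A K).2 ⟨_, hc, rfl⟩)
  have hc : ∀ c, H.Adj (.inr (.inl j)) (.inl c) := fun c =>
    hle (gadgetGraph_adj_inr_inl F A K (by simp) (by simp))
  exact (hH.adj_or_adj_of_four_cycle (hv ha) (hc a).symm (hc b) (hv hb).symm
    (by simp) (by simpa using hab)).resolve_left fun h => hj h.symm

lemma le_comap_inl_of_isClique {H : SimpleGraph (α ⊕ Fin (K + 1) ⊕ Unit)}
    (hA : F.IsClique A) (hle : gadgetGraph F A K ≤ H)
    (hAH : (H.comap (Function.Embedding.inl : α ↪ _)).IsClique A) :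
    F ≤ H.comap (Function.Embedding.inl : α ↪ _) := by
  rw [← sdiff_sup_cancel hA.spanningCoe_top_le, ← comap_inl_gadgetGraph F A K]
  exact sup_le (comap_monotone _ hle) hAH.spanningCoe_top_le

end Reduction

theorem gadget_completion_iff_general {α : Type*} [Fintype α] (F : SimpleGraph α)
    (A : Set α) (hA : F.IsClique A) (k K : ℕ)
    (hK : K = k + A.ncard * (A.ncard - 1) / 2) :
    (∃ F' : SimpleGraph α, IsChordalCompletion F F' ∧ fill F F' ≤ k) ↔
      (∃ H : SimpleGraph (α ⊕ Fin (K + 1) ⊕ Unit),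
        IsChordalCompletion (gadgetGraph F A K) H ∧ fill (gadgetGraph F A K) H ≤ K) := by
  constructor
  · rintro ⟨F', ⟨hF, hF'⟩, hfill⟩
    refine ⟨_, ⟨le_sup_left, chordal_gadgetGraph_sup_map hA hF hF'⟩, ?_⟩
    rw [fill_sup_map _ (comap_inl_gadgetGraph_le hF), fill_comap_inl_gadgetGraph hA hF]
    omega
  · rintro ⟨H, ⟨hle, hH⟩, hfill⟩
    have hAH := isClique_comap_inl_of_fill_le hle hH (hK ▸ hfill)
    have hFH := le_comap_inl_of_isClique hA hle hAH
    refine ⟨_, ⟨hFH, hH.comap _⟩, ?_⟩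
    have := fill_comap_le Function.Embedding.inl hle
    rw [fill_comap_inl_gadgetGraph hA hFH] at this
    omega

/-- `F` has a chordal completion with at most `k` fill edges iff the gadget graph `G`
has a chordal completion with at most `K = k + |A|(|A|-1)/2` fill edges. -/
theorem gadget_completion_iff {α : Type*} [Fintype α] (F : SimpleGraph α)
    (A B : Set α) (hcover : A ∪ B = Set.univ) (hdisj : Disjoint A B)
    (hA : F.IsClique A) (hB : F.IsClique B) (k K : ℕ)
    (hK : K = k + A.ncard * (A.ncard - 1) / 2) :
    (∃ F' : SimpleGraph α, IsChordalCompletion F F' ∧ fill F F' ≤ k) ↔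
      (∃ H : SimpleGraph (α ⊕ Fin (K + 1) ⊕ Unit),
        IsChordalCompletion (gadgetGraph F A K) H ∧ fill (gadgetGraph F A K) H ≤ K) :=
  gadget_completion_iff_general F A hA k K hK
end
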